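/- Let k ≥ 1 be an integer, h ≠ 0 a real number, and t₀ ∈ ℝ. For every real polynomial p of degree at most k, p′(t₀) = (1/h)·∑_{i=0}^k α_i^k p(t₀ + i·h), where α_0^k = −∑_{j=1}^k 1/j and α_i^k = (−1)^{i−1}·binom(k,i)/i for 1 ≤ i ≤ k. -/

import Mathlib

/-!
After the Taylor shift `q = p(t₀ + ·)`, the right-hand side times `h` is
`∑ₘ qₘ hᵐ ∑ᵢ αᵢ iᵐ`, so it suffices that the moments `∑ᵢ αᵢ iᵐ` equal `δ_{m,1}` for `m ≤ k`.
Since `αᵢ i = δ_{i,0} - (-1)ⁱ binom(k,i)`, the moment `m + 1` is `0ᵐ` minus, up to sign, the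
`k`-th forward difference of `x ↦ xᵐ` at `0`, which vanishes for `m < k`. The moment `0`
vanishes by induction on `k`, because `α^{k+1}_i - α^k_i = -(-1)ⁱ binom(k+1,i) / (k+1)`
has zero sum over `i`.
-/

noncomputable def alphaCoef (k i : ℕ) : ℝ :=
  if i = 0 then -(∑ j ∈ Finset.Icc 1 k, (1 : ℝ) / j)
  else (-1) ^ (i - 1) * (Nat.choose k i : ℝ) / i

open Finset Polynomial

theorem sum_range_neg_one_pow_mul_choose_mul_pow_eq_zero {R : Type*} [CommRing R] {n k : ℕ} (h : n < k) :
    ∑ i ∈ range (k + 1), (-1 : R) ^ i * k.choose i * (i : R) ^ n = 0 := by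
  have hΔ := congrFun (fwdDiff_iter_pow_eq_zero_of_lt (R := R) h) 0
  rw [fwdDiff_iter_eq_sum_shift, Pi.zero_apply] at hΔ
  calc _ = (-1) ^ k * ∑ i ∈ range (k + 1),
        ((-1 : ℤ) ^ (k - i) * k.choose i) • (0 + i • (1 : R)) ^ n := by
        rw [mul_sum]
        refine sum_congr rfl fun i hi => ?_
        obtain ⟨j, rfl⟩ := Nat.exists_eq_add_of_le (mem_range_succ_iff.mp hi)
        -- `(-1) ^ (i + j) * (-1) ^ j = (-1) ^ i`
        have hsq : (-1 : R) ^ j * (-1) ^ j = 1 := pow_mul_pow_eq_one j (by norm_num)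
        simp only [Nat.add_sub_cancel_left, zero_add, nsmul_one, zsmul_eq_mul]
        push_cast
        linear_combination (-(-1) ^ i * ((i + j).choose i : R) * (i : R) ^ n) * hsq
    _ = 0 := by rw [hΔ, mul_zero]

lemma alphaCoef_succ (k i : ℕ) :
    alphaCoef (k + 1) i = alphaCoef k i - (-1) ^ i * (k + 1).choose i / (k + 1) := by
  cases i with
  | zero =>
    simp only [alphaCoef, if_true, sum_Icc_succ_top (Nat.le_add_left 1 k), Nat.choose_zero_right]
    push_cast
    ring
  | succ j =>
    have hchoose : ((k + 1 : ℕ) : ℝ) * k.choose j = (k + 1).choose (j + 1) * ((j + 1 : ℕ) : ℝ) := by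
      exact_mod_cast Nat.add_one_mul_choose_eq k j
    have hpascal : ((k + 1).choose (j + 1) : ℝ) = k.choose j + k.choose (j + 1) := by
      exact_mod_cast Nat.choose_succ_succ k j
    simp only [alphaCoef, Nat.add_one_ne_zero, if_false, Nat.add_sub_cancel]
    push_cast at hchoose ⊢
    field_simp
    linear_combination (-1) ^ j * hchoose + (-1) ^ j * (k + 1) * hpascal

lemma sum_alphaCoef (k : ℕ) : ∑ i ∈ range (k + 1), alphaCoef k i = 0 := by
  induction k with
  | zero => simp [alphaCoef]
  | succ k ih =>
    have halt := sum_range_neg_one_pow_mul_choose_mul_pow_eq_zero (R := ℝ) (n := 0) k.succ_pos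
    simp only [pow_zero, mul_one] at halt
    have htop : alphaCoef k (k + 1) = 0 := by simp [alphaCoef]
    simp only [alphaCoef_succ, sum_sub_distrib, ← sum_div, halt, zero_div, sub_zero]
    rw [sum_range_succ, ih, htop, add_zero]

lemma alphaCoef_mul_self (k i : ℕ) :
    alphaCoef k i * i = (if i = 0 then 1 else 0) - (-1) ^ i * k.choose i := by
  cases i with
  | zero => simp [alphaCoef]
  | succ j =>
    simp only [alphaCoef, Nat.add_one_ne_zero, if_false, Nat.add_sub_cancel]
    field_simp
    ring

lemma sum_alphaCoef_mul_pow_succ {k n : ℕ} (h : n < k) :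
    ∑ i ∈ range (k + 1), alphaCoef k i * (i : ℝ) ^ (n + 1) = 0 ^ n := by
  simp only [pow_succ', ← mul_assoc, alphaCoef_mul_self, sub_mul, sum_sub_distrib,
    sum_range_neg_one_pow_mul_choose_mul_pow_eq_zero h, ite_mul, one_mul, zero_mul, sum_ite_eq',
    mem_range, Nat.succ_pos, if_true, Nat.cast_zero, sub_zero]

lemma sum_alphaCoef_mul_pow {k m : ℕ} (hm : m ≤ k) :
    ∑ i ∈ range (k + 1), alphaCoef k i * (i : ℝ) ^ m = if m = 1 then 1 else 0 := by
  cases m with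
  | zero => simpa using sum_alphaCoef k
  | succ n => simp [sum_alphaCoef_mul_pow_succ hm, zero_pow_eq]

lemma sum_alphaCoef_mul_eval_mul {k : ℕ} (q : ℝ[X]) (hq : q.natDegree ≤ k) (h : ℝ) :
    ∑ i ∈ range (k + 1), alphaCoef k i * q.eval (i * h) = q.coeff 1 * h := by
  have hmoment : ∀ m ∈ range (k + 1), q.coeff m * h ^ m *
      ∑ i ∈ range (k + 1), alphaCoef k i * (i : ℝ) ^ m = if m = 1 then q.coeff 1 * h else 0 := by
    intro m hm
    rw [sum_alphaCoef_mul_pow (mem_range_succ_iff.mp hm)]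
    split_ifs with h1 <;> simp [h1]
  calc _ = ∑ m ∈ range (k + 1), q.coeff m * h ^ m *
        ∑ i ∈ range (k + 1), alphaCoef k i * (i : ℝ) ^ m := by
        simp only [eval_eq_sum_range' (Nat.lt_succ_of_le hq), mul_sum]
        rw [sum_comm]
        exact sum_congr rfl fun m _ => sum_congr rfl fun i _ => by ring
    _ = q.coeff 1 * h := by
        rw [sum_congr rfl hmoment, sum_ite_eq']
        split_ifs with h1
        · rfl
        · rw [coeff_eq_zero_of_natDegree_lt (by simp only [mem_range] at h1; omega), zero_mul]

theorem deriv_eq_equidistant_combination (k : ℕ) (h : ℝ) (hh : h ≠ 0)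
    (t₀ : ℝ) (p : Polynomial ℝ) (hp : p.degree ≤ (k : ℕ)) :
    (Polynomial.derivative p).eval t₀
      = (1 / h) * ∑ i ∈ Finset.range (k + 1), alphaCoef k i * p.eval (t₀ + (i : ℝ) * h) := by
  have hdeg : (taylor t₀ p).natDegree ≤ k := by
    rwa [natDegree_taylor, natDegree_le_iff_degree_le]
  have hsum := sum_alphaCoef_mul_eval_mul (taylor t₀ p) hdeg h
  simp only [taylor_eval, taylor_coeff_one, add_comm _ t₀] at hsum
  rw [hsum]
  field_simp
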